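/- Let M > 0 and set R := M + 16π². For A ∈ ℝ, let r̃^A : ℝ → ℝ be the 1-periodic function defined on [0,1) by: r̃^A(x) = R for 0 ≤ x ≤ 1/4; r̃^A(x) = R + 4(A−R)(x − 1/4) for 1/4 < x < 1/2; r̃^A(x) = A for 1/2 ≤ x ≤ 3/4; r̃^A(x) = R + 4(A−R)(1 − x) for 3/4 < x < 1. Let λ ∈ ℝ, and suppose that for every A ≤ 0 there are a real number K(A) and a twice continuously differentiable function φ_A : ℝ → ℝ that is 1-periodic, positive on ℝ, normalized by ∫₀¹ φ_A(x)² dx = 1, and satisfies φ_A'' + 2λφ_A' + (r̃^A + λ²)φ_A = K(A) φ_A on ℝ. Then K(A) converges to R − 16π² = M as A → −∞. -/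

import Mathlib

/-!
Both bounds come from the maximum principle for `L ψ = ψ'' + 2λψ' + (r + λ²)ψ`: if `u > 0` and
`v / u` attains its maximum `θ` at an interior point `x₀`, then `v - θ u` has a local maximum `0`
at `x₀`, hence `L v (x₀) ≤ θ · L u (x₀)`.

Lower bound: `v = e^{-λx} sin (4πx)` vanishes at both ends of `[0, 1/4]`, where `r̃^A = R`, and
satisfies `L v = (R - 16π²) v` there; comparing it with `Φ A` gives `R - 16π² ≤ K(A)` for all `A`.

Upper bound: for `ε > 0` there is a positive `1`-periodic `w` equal to
`e^{-λ(x-1/8)} cos (β(x-1/8))`, with `β² ≥ 16π² - ε`, on `(-η, 1/4 + η)`, so that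
`L w ≤ (R - 16π² + ε) w` there. On the rest of the period `r̃^A ≤ R + 4(A - R)η`, which tends to
`-∞` and beats the bounded ratio `(w'' + 2λw' + λ²w) / w`. Comparing `Φ A` with `w` then gives
`K(A) ≤ R - 16π² + ε` once `A` is negative enough.
-/

open Real Set Filter Topology Function

noncomputable section

def secondOrderOp (b : ℝ) (c f : ℝ → ℝ) (x : ℝ) : ℝ :=
  deriv (deriv f) x + b * deriv f x + c x * f x

theorem Function.Periodic.deriv {f : ℝ → ℝ} {T : ℝ} (h : Periodic f T) :
    Periodic (deriv f) T := fun x => by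
  rw [← deriv_comp_add_const, show (fun y => f (y + T)) = f from funext h]

theorem Function.Periodic.secondOrderOp {b T : ℝ} {c f : ℝ → ℝ} (hc : Periodic c T)
    (hf : Periodic f T) : Periodic (secondOrderOp b c f) T := fun x => by
  simp only [_root_.secondOrderOp, hf.deriv.deriv x, hf.deriv x, hc x, hf x]

theorem Filter.EventuallyEq.secondOrderOp_eq {b x : ℝ} {c f g : ℝ → ℝ} (h : f =ᶠ[𝓝 x] g) :
    secondOrderOp b c f x = secondOrderOp b c g x := by
  simp only [secondOrderOp, h.deriv.deriv_eq, h.deriv_eq, h.eq_of_nhds]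

theorem IsLocalMax.deriv_deriv_nonpos {f : ℝ → ℝ} {a : ℝ} (hf : Differentiable ℝ f)
    (h : IsLocalMax f a) : deriv (deriv f) a ≤ 0 := by
  by_contra! hpos
  have hright : ∀ᶠ x in 𝓝[>] a, 0 < deriv f x := deriv_pos_right_of_sign_deriv <|
    nhdsWithin_le_nhds (eventually_nhdsWithin_sign_eq_of_deriv_pos hpos h.deriv_eq_zero)
  obtain ⟨b, hab, hb⟩ := (nhdsGT_basis a).eventually_iff.mp
    (hright.and (nhdsWithin_le_nhds h))
  obtain ⟨ξ, hξ, hslope⟩ := exists_deriv_eq_slope f (show a < (a + b) / 2 by linarith)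
    hf.continuous.continuousOn hf.differentiableOn
  have hderiv := (hb ⟨hξ.1, hξ.2.trans (by linarith)⟩).1
  have hle := (hb (show (a + b) / 2 ∈ Ioo a b from ⟨by linarith, by linarith⟩)).2
  rw [hslope, div_pos_iff_of_pos_right (by linarith)] at hderiv
  linarith

theorem secondOrderOp_le_of_isMaxOn_div {b x₀ : ℝ} {c u v : ℝ → ℝ} {s : Set ℝ}
    (hu : ContDiff ℝ 2 u) (hv : ContDiff ℝ 2 v) (hs : s ∈ 𝓝 x₀) (hpos : ∀ x ∈ s, 0 < u x)
    (hmax : IsMaxOn (fun x => v x / u x) s x₀) :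
    secondOrderOp b c v x₀ ≤ v x₀ / u x₀ * secondOrderOp b c u x₀ := by
  set θ := v x₀ / u x₀
  have hvx₀ : v x₀ = θ * u x₀ := (div_mul_cancel₀ _ (hpos x₀ (mem_of_mem_nhds hs)).ne').symm
  have hloc : IsLocalMax (fun x => v x - θ * u x) x₀ := by
    filter_upwards [hs] with x hx
    have := (div_le_iff₀ (hpos x hx)).mp (hmax hx)
    linarith
  have hderiv : deriv (fun x => v x - θ * u x) = fun x => deriv v x - θ * deriv u x :=
    funext fun x => ((hv.differentiable two_ne_zero x).hasDerivAt.sub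
      ((hu.differentiable two_ne_zero x).hasDerivAt.const_mul θ)).deriv
  have hd1 := hloc.deriv_eq_zero
  have hd2 := hloc.deriv_deriv_nonpos (f := fun x => v x - θ * u x)
    (hv.differentiable two_ne_zero |>.sub (hu.differentiable two_ne_zero |>.const_mul θ))
  have hderiv2 : HasDerivAt (fun x => deriv v x - θ * deriv u x)
      (deriv (deriv v) x₀ - θ * deriv (deriv u) x₀) x₀ :=
    (hv.differentiable_deriv_two x₀).hasDerivAt.sub
      ((hu.differentiable_deriv_two x₀).hasDerivAt.const_mul θ)
  rw [hderiv] at hd1 hd2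
  rw [hderiv2.deriv] at hd2
  simp only [secondOrderOp]
  linear_combination hd2 + b * hd1 + c x₀ * hvx₀

theorem eigenvalue_le_of_periodic_supersolution {T b K κ : ℝ} {c u v : ℝ → ℝ} (hT : 0 < T)
    (hu : ContDiff ℝ 2 u) (hv : ContDiff ℝ 2 v) (hu_per : Periodic u T) (hv_per : Periodic v T)
    (hu_pos : ∀ x, 0 < u x) (hv_pos : ∀ x, 0 < v x)
    (hu_eq : ∀ x, secondOrderOp b c u x = K * u x)
    (hv_le : ∀ x, secondOrderOp b c v x ≤ κ * v x) : K ≤ κ := by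
  have hratio : Continuous fun x => u x / v x :=
    hu.continuous.div hv.continuous fun x => (hv_pos x).ne'
  obtain ⟨_, ⟨x₀, rfl⟩, hmax⟩ :=
    ((hu_per.div hv_per).compact_of_continuous hT.ne' hratio).exists_isGreatest
      (range_nonempty _)
  have htouch := secondOrderOp_le_of_isMaxOn_div (b := b) (c := c) hv hu univ_mem
    (fun x _ => hv_pos x) (fun x _ => hmax ⟨x, rfl⟩)
  have hsuper : u x₀ / v x₀ * secondOrderOp b c v x₀ ≤ κ * u x₀ := calc
    _ ≤ u x₀ / v x₀ * (κ * v x₀) :=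
      mul_le_mul_of_nonneg_left (hv_le x₀) (div_pos (hu_pos x₀) (hv_pos x₀)).le
    _ = κ * u x₀ := by field_simp [(hv_pos x₀).ne']
  rw [hu_eq] at htouch
  exact le_of_mul_le_mul_right (htouch.trans hsuper) (hu_pos x₀)

theorem secondOrderOp_exp_mul {lam ω a : ℝ} {c g g' : ℝ → ℝ}
    (hg : ∀ x, HasDerivAt g (g' x) x) (hg' : ∀ x, HasDerivAt g' (-ω ^ 2 * g x) x) (x : ℝ) :
    secondOrderOp (2 * lam) c (fun y => exp (-(lam * (y - a))) * g y) x
      = (c x - lam ^ 2 - ω ^ 2) * (exp (-(lam * (x - a))) * g x) := by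
  have he : ∀ y, HasDerivAt (fun y => exp (-(lam * (y - a))))
      (-lam * exp (-(lam * (y - a)))) y := fun y =>
    ((((hasDerivAt_id y).sub_const a).const_mul lam).neg.exp).congr_deriv (by simp; ring)
  have h1 : deriv (fun y => exp (-(lam * (y - a))) * g y)
      = fun y => exp (-(lam * (y - a))) * (g' y - lam * g y) :=
    funext fun y => (((he y).mul (hg y)).congr_deriv (by ring)).deriv
  have h2 : HasDerivAt (fun y => exp (-(lam * (y - a))) * (g' y - lam * g y))
      (exp (-(lam * (x - a))) * (-ω ^ 2 * g x - 2 * lam * g' x + lam ^ 2 * g x)) x :=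
    ((he x).mul ((hg' x).sub ((hg x).const_mul lam))).congr_deriv
      (by simp only [Pi.sub_apply]; ring)
  simp only [secondOrderOp, h1, h2.deriv]
  ring

theorem sub_sq_le_eigenvalue_of_pos_on_Icc {a b ω lam ρ K : ℝ} {r u : ℝ → ℝ} (hab : a < b)
    (hω : ω * (b - a) = π) (hu : ContDiff ℝ 2 u) (hpos : ∀ x ∈ Icc a b, 0 < u x)
    (hr : ∀ x ∈ Ioo a b, r x = ρ)
    (heq : ∀ x ∈ Ioo a b, secondOrderOp (2 * lam) (fun y => r y + lam ^ 2) u x = K * u x) :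
    ρ - ω ^ 2 ≤ K := by
  have hω₀ : 0 < ω := by nlinarith [pi_pos]
  set v : ℝ → ℝ := fun y => exp (-(lam * (y - a))) * sin (ω * (y - a))
  have hv : ContDiff ℝ 2 v := by fun_prop
  have hsin : ∀ y, HasDerivAt (fun y => sin (ω * (y - a))) (ω * cos (ω * (y - a))) y :=
    fun y => (((hasDerivAt_id y).sub_const a).const_mul ω).sin.congr_deriv (by simp; ring)
  have hcos : ∀ y, HasDerivAt (fun y => ω * cos (ω * (y - a)))
      (-ω ^ 2 * sin (ω * (y - a))) y := fun y =>
    ((((hasDerivAt_id y).sub_const a).const_mul ω).cos.const_mul ω).congr_deriv (by simp; ring)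
  have hv_op : ∀ x, secondOrderOp (2 * lam) (fun y => r y + lam ^ 2) v x
      = (r x - ω ^ 2) * v x := fun x =>
    (secondOrderOp_exp_mul hsin hcos x).trans (by ring)
  have hv_pos : ∀ x ∈ Ioo a b, 0 < v x := fun x hx =>
    mul_pos (exp_pos _) (sin_pos_of_pos_of_lt_pi (by nlinarith [hx.1]) (by nlinarith [hx.2]))
  have hv_a : v a = 0 := by simp [v]
  have hv_b : v b = 0 := by simp [v, hω]
  obtain ⟨x₀, hx₀, hmax⟩ := isCompact_Icc.exists_isMaxOn (nonempty_Icc.2 hab.le)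
    (hv.continuous.continuousOn.div hu.continuous.continuousOn fun x hx => (hpos x hx).ne')
  have hmid : (a + b) / 2 ∈ Ioo a b := ⟨by linarith, by linarith⟩
  have hθ : 0 < v x₀ / u x₀ :=
    (div_pos (hv_pos _ hmid) (hpos _ (Ioo_subset_Icc_self hmid))).trans_le
      (hmax (Ioo_subset_Icc_self hmid))
  have hx₀' : x₀ ∈ Ioo a b := by
    refine ⟨lt_of_le_of_ne hx₀.1 ?_, lt_of_le_of_ne hx₀.2 ?_⟩ <;> rintro rfl
    · simp [hv_a] at hθ
    · simp [hv_b] at hθ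
  have htouch := secondOrderOp_le_of_isMaxOn_div (b := 2 * lam) (c := fun y => r y + lam ^ 2)
    hu hv (Icc_mem_nhds hx₀'.1 hx₀'.2) hpos hmax
  have hK : v x₀ / u x₀ * (K * u x₀) = K * v x₀ := by field_simp [(hpos x₀ hx₀).ne']
  rw [hv_op, heq x₀ hx₀', hr x₀ hx₀', hK] at htouch
  exact le_of_mul_le_mul_right htouch (hv_pos x₀ hx₀')

def periodize (F : ℝ → ℝ) (x : ℝ) : ℝ := F (x - round x)

theorem periodize_periodic (F : ℝ → ℝ) : Periodic (periodize F) 1 := fun x => by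
  simp only [periodize, round_add_one, Int.cast_add, Int.cast_one, add_sub_add_right_eq_sub]

theorem periodize_eq_self {F : ℝ → ℝ} {x : ℝ} (hx : x ∈ Ico (-(1 / 2)) (1 / 2)) :
    periodize F x = F x := by
  simp [periodize, round_eq_zero_iff.2 hx]

theorem periodize_eventuallyEq {F : ℝ → ℝ} {c : ℝ} (hF : ∀ t, 1 / 4 ≤ |t| → F t = c) (x : ℝ) :
    periodize F =ᶠ[𝓝 x] fun y => F (y - round x) := by
  filter_upwards [Ioo_mem_nhds (show x - 1 / 8 < x by linarith)
    (show x < x + 1 / 8 by linarith)] with y hy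
  set t := y - round x
  have ht : |t| < 5 / 8 := by
    have := abs_sub_round x
    rw [abs_le] at this
    rw [abs_lt]; constructor <;> linarith [hy.1, hy.2]
  have hround : round y = round x + round t := by
    rw [show y = t + round x by simp [t], round_add_intCast, add_comm]
  unfold periodize
  rcases eq_or_ne (round t) 0 with h0 | h0
  · rw [hround, h0, add_zero]
  -- both `t` and `y - round y = t - round t` then lie where `F = c`
  have hk : (1 : ℝ) ≤ |(round t : ℝ)| := by exact_mod_cast Int.one_le_abs h0
  have ht' : 1 / 2 ≤ |t| := by
    by_contra! h
    exact h0 (round_eq_zero_iff.2 ⟨by linarith [neg_abs_le t], by linarith [le_abs_self t]⟩)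
  rw [hF t (by linarith), hF _ ?_]
  rw [hround, Int.cast_add, show y - (↑(round x) + ↑(round t)) = t - round t by ring]
  linarith [abs_sub_abs_le_abs_sub (round t : ℝ) t, abs_sub_comm (round t : ℝ) t]

theorem ContDiff.periodize {F : ℝ → ℝ} {c : ℝ} {n : WithTop ℕ∞} (hF : ContDiff ℝ n F)
    (hc : ∀ t, 1 / 4 ≤ |t| → F t = c) : ContDiff ℝ n (periodize F) :=
  contDiff_iff_contDiffAt.2 fun x => (hF.comp (contDiff_id.sub contDiff_const)).contDiffAt
    |>.congr_of_eventuallyEq (periodize_eventuallyEq hc x)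

theorem exists_frequency_and_margin {ε : ℝ} (hε : 0 < ε) :
    ∃ β η : ℝ, 0 < β ∧ 0 < η ∧ η ≤ 1 / 16 ∧ β * (1 / 8 + 2 * η) ≤ π / 2 ∧
      16 * π ^ 2 - ε ≤ β ^ 2 := by
  have hπ := pi_pos
  set δ := min π (ε / (8 * π))
  have hδ : 0 < δ := lt_min hπ (by positivity)
  have hδπ : δ ≤ π := min_le_left _ _
  have hδε : δ * (8 * π) ≤ ε := (le_div_iff₀ (by positivity)).1 (min_le_right _ _)
  refine ⟨4 * π - δ, δ / (64 * π), by linarith, by positivity, ?_, ?_, by nlinarith⟩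
  · rw [div_le_iff₀ (by positivity)]; linarith
  · have : (4 * π - δ) * (δ / (64 * π)) ≤ δ / 16 := by
      rw [mul_div_assoc', div_le_div_iff₀ (by positivity) (by norm_num)]; nlinarith
    nlinarith

theorem exists_cutoff_profile (lam : ℝ) {β η : ℝ} (hβ : 0 < β) (hη : 0 < η) (hη' : η ≤ 1 / 16)
    (hβη : β * (1 / 8 + 2 * η) ≤ π / 2) :
    ∃ F : ℝ → ℝ, ContDiff ℝ 2 F ∧ (∀ t, 0 < F t) ∧ (∀ t, 1 / 4 ≤ |t| → F t = 1) ∧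
      ∀ t, |t| ≤ 1 / 8 + η → F t = exp (-(lam * t)) * cos (β * t) := by
  let ρ : ContDiffBump (0 : ℝ) := ⟨1 / 8 + η, 1 / 8 + 2 * η, by positivity, by linarith⟩
  refine ⟨fun t => ρ t * (exp (-(lam * t)) * cos (β * t)) + (1 - ρ t),
    (ρ.contDiff.mul (by fun_prop)).add (contDiff_const.sub ρ.contDiff), fun t => ?_,
    fun t ht => ?_, fun t ht => ?_⟩
  · rcases (ρ.nonneg (x := t)).eq_or_lt with h0 | hpos
    · simp [← h0]
    have ht : |t| < 1 / 8 + 2 * η := by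
      simpa [ρ] using ρ.support_eq.subset hpos.ne'
    have hcos : 0 < cos (β * t) := cos_pos_of_mem_Ioo (abs_lt.1 (by
      rw [abs_mul, abs_of_pos hβ]; nlinarith [abs_nonneg t]))
    have := ρ.le_one (x := t)
    positivity
  · simp [ρ.zero_of_le_dist (x := t) (by simp [ρ]; linarith)]
  · simp [ρ.one_of_mem_closedBall (x := t) (by simpa [ρ] using ht)]

theorem exists_plateau_supersolution (lam : ℝ) {ε : ℝ} (hε : 0 < ε) :
    ∃ w : ℝ → ℝ, ∃ η : ℝ, 0 < η ∧ η ≤ 1 / 4 ∧ ContDiff ℝ 2 w ∧ Periodic w 1 ∧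
      (∀ x, 0 < w x) ∧ ∀ x ∈ Ioo (-η) (1 / 4 + η),
        secondOrderOp (2 * lam) (fun _ => lam ^ 2) w x ≤ (ε - 16 * π ^ 2) * w x := by
  obtain ⟨β, η, hβ, hη, hη', hβη, hβε⟩ := exists_frequency_and_margin hε
  obtain ⟨F, hF, hF_pos, hF_one, hF_eq⟩ := exists_cutoff_profile lam hβ hη hη' hβη
  refine ⟨fun x => periodize F (x - 1 / 8), η, hη, by linarith,
    (hF.periodize hF_one).comp (contDiff_id.sub contDiff_const),
    (periodize_periodic F).sub_const _, fun x => hF_pos _, fun x hx => ?_⟩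
  have hloc : (fun y => periodize F (y - 1 / 8))
      =ᶠ[𝓝 x] fun y => exp (-(lam * (y - 1 / 8))) * cos (β * (y - 1 / 8)) := by
    filter_upwards [Ioo_mem_nhds hx.1 hx.2] with y hy
    rw [periodize_eq_self ⟨by linarith [hy.1], by linarith [hy.2]⟩,
      hF_eq _ (abs_le.2 ⟨by linarith [hy.1], by linarith [hy.2]⟩)]
  have hcos : ∀ y, HasDerivAt (fun y => cos (β * (y - 1 / 8)))
      (-β * sin (β * (y - 1 / 8))) y := fun y =>
    (((hasDerivAt_id y).sub_const _).const_mul β).cos.congr_deriv (by simp; ring)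
  have hsin : ∀ y, HasDerivAt (fun y => -β * sin (β * (y - 1 / 8)))
      (-β ^ 2 * cos (β * (y - 1 / 8))) y :=
    fun y => ((((hasDerivAt_id y).sub_const _).const_mul β).sin.const_mul (-β)).congr_deriv
      (by simp; ring)
  rw [hloc.secondOrderOp_eq, secondOrderOp_exp_mul hcos hsin x, ← hloc.eq_of_nhds]
  have : 0 < periodize F (x - 1 / 8) := hF_pos _
  nlinarith

theorem exists_secondOrderOp_le_mul_of_periodic {b T : ℝ} {c w : ℝ → ℝ} (hT : T ≠ 0)
    (hc_per : Periodic c T) (hw_per : Periodic w T) (hc : Continuous c) (hw : ContDiff ℝ 2 w)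
    (hw_pos : ∀ x, 0 < w x) : ∃ C, ∀ x, secondOrderOp b c w x ≤ C * w x := by
  have hw'' : Continuous (deriv (deriv w)) := (hw.deriv' (n := 1)).continuous_deriv le_rfl
  have hw' : Continuous (deriv w) := hw.continuous_deriv one_le_two
  have hcont : Continuous fun x => secondOrderOp b c w x / w x :=
    Continuous.div (by unfold secondOrderOp; fun_prop) hw.continuous
      fun x => (hw_pos x).ne'
  obtain ⟨C, hC⟩ :=
    (((hc_per.secondOrderOp hw_per).div hw_per).isBounded_of_continuous hT hcont).bddAbove
  exact ⟨C, fun x => (div_le_iff₀ (hw_pos x)).1 (hC ⟨x, rfl⟩)⟩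

/-- The growth-rate profile `r̃^A`. -/
structure IsTrapezoidal (R A : ℝ) (r : ℝ → ℝ) : Prop where
  periodic : Periodic r 1
  eq_top : ∀ x, 0 ≤ x → x ≤ 1 / 4 → r x = R
  eq_descent : ∀ x, 1 / 4 < x → x < 1 / 2 → r x = R + 4 * (A - R) * (x - 1 / 4)
  eq_bottom : ∀ x, 1 / 2 ≤ x → x ≤ 3 / 4 → r x = A
  eq_ascent : ∀ x, 3 / 4 < x → x < 1 → r x = R + 4 * (A - R) * (1 - x)

namespace IsTrapezoidal

variable {R A : ℝ} {r : ℝ → ℝ}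

theorem le_top (hr : IsTrapezoidal R A r) (hA : A ≤ R) (x : ℝ) : r x ≤ R := by
  obtain ⟨y, ⟨hy₀, hy₁⟩, hxy⟩ := hr.periodic.exists_mem_Ico₀ one_pos x
  rw [hxy]
  rcases le_or_gt y (1 / 4) with h₁ | h₁
  · exact (hr.eq_top y hy₀ h₁).le
  rcases lt_or_ge y (1 / 2) with h₂ | h₂
  · rw [hr.eq_descent y h₁ h₂]; nlinarith
  rcases le_or_gt y (3 / 4) with h₃ | h₃
  · rw [hr.eq_bottom y h₂ h₃]; exact hA
  · rw [hr.eq_ascent y h₃ hy₁]; nlinarith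

theorem le_of_mem_Icc (hr : IsTrapezoidal R A r) (hA : A ≤ R) {η x : ℝ} (hη : 0 < η)
    (hη' : η ≤ 1 / 4) (hx : x ∈ Icc (1 / 4 + η) (1 - η)) : r x ≤ R + 4 * (A - R) * η := by
  obtain ⟨hx₁, hx₂⟩ := hx
  rcases lt_or_ge x (1 / 2) with h₂ | h₂
  · rw [hr.eq_descent x (by linarith) h₂]; nlinarith
  rcases le_or_gt x (3 / 4) with h₃ | h₃
  · rw [hr.eq_bottom x h₂ h₃]; nlinarith
  · rw [hr.eq_ascent x h₃ (by linarith)]; nlinarith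

theorem secondOrderOp_le (hr : IsTrapezoidal R A r) {lam η C κ : ℝ} {w : ℝ → ℝ}
    (hw_per : Periodic w 1) (hw_pos : ∀ x, 0 < w x) (hη : 0 < η) (hη' : η ≤ 1 / 4)
    (hC : ∀ x, secondOrderOp (2 * lam) (fun _ => lam ^ 2) w x ≤ C * w x)
    (hplateau : ∀ x ∈ Ioo (-η) (1 / 4 + η),
      secondOrderOp (2 * lam) (fun _ => lam ^ 2) w x ≤ (κ - R) * w x)
    (hAR : A ≤ R) (hAκ : R + 4 * (A - R) * η + C ≤ κ) (x : ℝ) :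
    secondOrderOp (2 * lam) (fun y => r y + lam ^ 2) w x ≤ κ * w x := by
  set D : ℝ → ℝ := fun y => secondOrderOp (2 * lam) (fun y => r y + lam ^ 2) w y - κ * w y
  have hc : Periodic (fun y => r y + lam ^ 2) 1 := fun y => by simp only [hr.periodic y]
  have hD : Periodic D 1 := fun y => by simp only [D, hc.secondOrderOp hw_per y, hw_per y]
  have hsplit : ∀ y,
      D y = secondOrderOp (2 * lam) (fun _ => lam ^ 2) w y + r y * w y - κ * w y := fun y => by
    simp only [D, secondOrderOp]; ring
  have hD_plateau : ∀ y ∈ Ioo (-η) (1 / 4 + η), D y ≤ 0 := fun y hy => by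
    rw [hsplit]; nlinarith [hplateau y hy, hr.le_top hAR y, hw_pos y]
  have hD_middle : ∀ y ∈ Icc (1 / 4 + η) (1 - η), D y ≤ 0 := fun y hy => by
    rw [hsplit]; nlinarith [hC y, hr.le_of_mem_Icc hAR hη hη' hy, hw_pos y]
  suffices D x ≤ 0 by simp only [D] at this; linarith
  obtain ⟨y, ⟨hy₀, hy₁⟩, hxy⟩ := hD.exists_mem_Ico₀ one_pos x
  rw [hxy]
  rcases lt_or_ge y (1 / 4 + η) with h | h
  · exact hD_plateau y ⟨by linarith, h⟩
  rcases le_or_gt y (1 - η) with h' | h'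
  · exact hD_middle y ⟨h, h'⟩
  · rw [← hD.sub_eq y]; exact hD_plateau _ ⟨by linarith, by linarith⟩

end IsTrapezoidal

end

theorem stmt17_general (M lam : ℝ)
    (R : ℝ) (hR : R = M + 16 * Real.pi ^ 2)
    (rt : ℝ → ℝ → ℝ)
    (hrtper : ∀ A : ℝ, Function.Periodic (rt A) 1)
    (hrt1 : ∀ A : ℝ, ∀ x : ℝ, 0 ≤ x → x ≤ 1/4 → rt A x = R)
    (hrt2 : ∀ A : ℝ, ∀ x : ℝ, 1/4 < x → x < 1/2 → rt A x = R + 4 * (A - R) * (x - 1/4))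
    (hrt3 : ∀ A : ℝ, ∀ x : ℝ, 1/2 ≤ x → x ≤ 3/4 → rt A x = A)
    (hrt4 : ∀ A : ℝ, ∀ x : ℝ, 3/4 < x → x < 1 → rt A x = R + 4 * (A - R) * (1 - x))
    (K : ℝ → ℝ) (Φ : ℝ → ℝ → ℝ)
    (hyp : ∀ A : ℝ, A ≤ 0 →
      ContDiff ℝ 2 (Φ A) ∧
      Function.Periodic (Φ A) 1 ∧
      (∀ x, 0 < Φ A x) ∧
      (∫ x in (0:ℝ)..1, (Φ A x) ^ 2) = 1 ∧
      (∀ x : ℝ,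
        deriv (deriv (Φ A)) x + 2 * lam * deriv (Φ A) x
          + (rt A x + lam ^ 2) * Φ A x = K A * Φ A x)) :
    Filter.Tendsto K Filter.atBot (nhds (R - 16 * Real.pi ^ 2)) ∧
    R - 16 * Real.pi ^ 2 = M := by
  have hr : ∀ A, IsTrapezoidal R A (rt A) := fun A =>
    ⟨hrtper A, hrt1 A, hrt2 A, hrt3 A, hrt4 A⟩
  have hRM : R - 16 * π ^ 2 = M := by rw [hR]; ring
  have lower : ∀ A ≤ 0, M ≤ K A := fun A hA => by
    obtain ⟨hΦ, -, hΦ_pos, -, hΦ_eq⟩ := hyp A hA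
    have := sub_sq_le_eigenvalue_of_pos_on_Icc (a := 0) (b := 1 / 4) (ω := 4 * π)
      (by norm_num) (by ring) hΦ (fun x _ => hΦ_pos x) (fun x hx => (hr A).eq_top x hx.1.le hx.2.le)
      (fun x _ => hΦ_eq x)
    linarith
  have upper : ∀ ε > 0, ∀ᶠ A in atBot, K A ≤ M + ε := fun ε hε => by
    obtain ⟨w, η, hη, hη', hw, hw_per, hw_pos, hplateau⟩ :=
      exists_plateau_supersolution lam hε
    obtain ⟨C, hC⟩ := exists_secondOrderOp_le_mul_of_periodic (b := 2 * lam) one_ne_zero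
      (fun _ => rfl) hw_per continuous_const hw hw_pos
    filter_upwards [eventually_le_atBot 0, eventually_le_atBot R,
      eventually_le_atBot (R + (M + ε - R - C) / (4 * η))] with A hA₀ hAR hAη
    obtain ⟨hΦ, hΦ_per, hΦ_pos, -, hΦ_eq⟩ := hyp A hA₀
    refine eigenvalue_le_of_periodic_supersolution one_pos hΦ hw hΦ_per hw_per hΦ_pos hw_pos
      hΦ_eq ((hr A).secondOrderOp_le hw_per hw_pos hη hη' hC ?_ hAR ?_)
    · exact fun x hx => (hplateau x hx).trans_eq (by rw [hR]; ring)
    · have := (le_div_iff₀ (by positivity)).1 (sub_le_iff_le_add'.2 hAη)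
      linarith
  rw [hRM]
  refine ⟨tendsto_order.2 ⟨fun a ha => ?_, fun b hb => ?_⟩, rfl⟩
  · filter_upwards [eventually_le_atBot 0] with A hA using ha.trans_le (lower A hA)
  · filter_upwards [upper ((b - M) / 2) (by linarith)] with A hA using by linarith

/-- with `R = M + 16π²` and `r̃^A` the `1`-periodic piecewise-linear function
equal to `R` on `[0,1/4]`, to `A` on `[1/2,3/4]`, and affine in between, if for every
`A ≤ 0` the operator `ψ ↦ ψ'' + 2λψ' + (r̃^A + λ²)ψ` has a positive normalized `1`-periodic
principal eigenfunction `Φ A` with eigenvalue `K A`, then `K A → R - 16π² = M` as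
`A → -∞`. -/
theorem stmt17 (M lam : ℝ) (hM : 0 < M)
    (R : ℝ) (hR : R = M + 16 * Real.pi ^ 2)
    (rt : ℝ → ℝ → ℝ)
    (hrtper : ∀ A : ℝ, Function.Periodic (rt A) 1)
    (hrt1 : ∀ A : ℝ, ∀ x : ℝ, 0 ≤ x → x ≤ 1/4 → rt A x = R)
    (hrt2 : ∀ A : ℝ, ∀ x : ℝ, 1/4 < x → x < 1/2 → rt A x = R + 4 * (A - R) * (x - 1/4))
    (hrt3 : ∀ A : ℝ, ∀ x : ℝ, 1/2 ≤ x → x ≤ 3/4 → rt A x = A)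
    (hrt4 : ∀ A : ℝ, ∀ x : ℝ, 3/4 < x → x < 1 → rt A x = R + 4 * (A - R) * (1 - x))
    (K : ℝ → ℝ) (Φ : ℝ → ℝ → ℝ)
    (hyp : ∀ A : ℝ, A ≤ 0 →
      ContDiff ℝ 2 (Φ A) ∧
      Function.Periodic (Φ A) 1 ∧
      (∀ x, 0 < Φ A x) ∧
      (∫ x in (0:ℝ)..1, (Φ A x) ^ 2) = 1 ∧
      (∀ x : ℝ,
        deriv (deriv (Φ A)) x + 2 * lam * deriv (Φ A) x
          + (rt A x + lam ^ 2) * Φ A x = K A * Φ A x)) :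
    Filter.Tendsto K Filter.atBot (nhds (R - 16 * Real.pi ^ 2)) ∧
    R - 16 * Real.pi ^ 2 = M :=
  stmt17_general M lam R hR rt hrtper hrt1 hrt2 hrt3 hrt4 K Φ hyp
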